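/- arXiv:1312.1097 — 4 statements merged into one kernel-verified Lean document; each statement's English description precedes it below -/
import Mathlib

section
/- Let n, m be unit vectors in R^3 with n·m > 0 and set B = (I - n n^T)(I - m m^T) + n m^T. Then B is invertible, B maps the orthogonal complement of m onto the orthogonal complement of n, and B maps the span of m onto the span of n. -/
open Matrix Set

/-!
`B` sends `m` to `n` and acts on `m^⊥` as the orthogonal projection onto `n^⊥`. Its inverse is
`1 - (n ⬝ᵥ m)⁻¹ n mᵀ + m nᵀ`, which sends `n` back to `m` and `n^⊥` into `m^⊥` (the oblique
projection onto `m^⊥` along `n`); both image statements follow from these two maps-to properties.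
-/

theorem Matrix.mulVec_image_eq_of_mul_eq_one {ι K : Type*} [Fintype ι] [DecidableEq ι] [CommRing K]
    {A A' : Matrix ι ι K} (h : A * A' = 1) {s t : Set (ι → K)}
    (hA : MapsTo A.mulVec s t) (hA' : MapsTo A'.mulVec t s) : A.mulVec '' s = t :=
  SurjOn.image_eq_of_mapsTo
    (RightInvOn.surjOn (fun y _ => by rw [mulVec_mulVec, h, one_mulVec]) hA') hA

theorem Matrix.mapsTo_mulVec_line {ι K : Type*} [Fintype ι] [CommRing K]
    {A : Matrix ι ι K} {u v : ι → K} (h : A *ᵥ u = v) :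
    MapsTo A.mulVec {x | ∃ t : K, x = t • u} {x | ∃ t : K, x = t • v} := by
  rintro _ ⟨t, rfl⟩
  exact ⟨t, by rw [mulVec_smul, h]⟩

section PlaneTransport

variable {ι K : Type*} [Fintype ι] [DecidableEq ι] [Field K] {n m : ι → K}

def planeTransport (n m : ι → K) : Matrix ι ι K :=
  (1 - vecMulVec n n) * (1 - vecMulVec m m) + vecMulVec n m

def planeTransportInv (n m : ι → K) : Matrix ι ι K :=
  1 - (n ⬝ᵥ m)⁻¹ • vecMulVec n m + vecMulVec m n

omit [DecidableEq ι] in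
theorem vecMulVec_mulVec_eq_smul (u v x : ι → K) : vecMulVec u v *ᵥ x = (v ⬝ᵥ x) • u := by
  rw [vecMulVec_mulVec, op_smul_eq_smul]

theorem planeTransport_eq (n m : ι → K) :
    planeTransport n m =
      1 - vecMulVec n n - vecMulVec m m + (n ⬝ᵥ m + 1) • vecMulVec n m := by
  simp only [planeTransport, sub_mul, mul_sub, one_mul, mul_one, vecMulVec_mul_vecMulVec,
    vecMulVec_smul, add_smul, one_smul]
  abel

theorem planeTransport_mul_planeTransportInv (hn : n ⬝ᵥ n = 1) (hm : m ⬝ᵥ m = 1)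
    (hnm : n ⬝ᵥ m ≠ 0) : planeTransport n m * planeTransportInv n m = 1 := by
  have hmn : m ⬝ᵥ n = n ⬝ᵥ m := dotProduct_comm m n
  rw [planeTransport_eq, planeTransportInv]
  simp only [mul_sub, sub_mul, mul_add, add_mul, mul_one, one_mul, smul_mul_assoc,
    mul_smul_comm, vecMulVec_mul_vecMulVec, vecMulVec_smul, hn, hm, hmn, smul_smul, one_smul]
  match_scalars <;> field_simp <;> ring

theorem planeTransport_mulVec_self (hm : m ⬝ᵥ m = 1) : planeTransport n m *ᵥ m = n := by
  simp [planeTransport, add_mulVec, sub_mulVec, ← mulVec_mulVec, vecMulVec_mulVec_eq_smul, hm]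

theorem planeTransportInv_mulVec_self (hn : n ⬝ᵥ n = 1) (hnm : n ⬝ᵥ m ≠ 0) :
    planeTransportInv n m *ᵥ n = m := by
  simp [planeTransportInv, add_mulVec, sub_mulVec, smul_mulVec, vecMulVec_mulVec_eq_smul,
    dotProduct_comm m n, hn, hnm]

theorem mapsTo_planeTransport_orthogonal (hn : n ⬝ᵥ n = 1) :
    MapsTo (planeTransport n m).mulVec {x | m ⬝ᵥ x = 0} {x | n ⬝ᵥ x = 0} := by
  intro x (hx : m ⬝ᵥ x = 0)
  have hBx : planeTransport n m *ᵥ x = x - (n ⬝ᵥ x) • n := by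
    simp [planeTransport, add_mulVec, sub_mulVec, ← mulVec_mulVec, vecMulVec_mulVec_eq_smul, hx]
  simp [hBx, dotProduct_sub, hn]

theorem mapsTo_planeTransportInv_orthogonal (hnm : n ⬝ᵥ m ≠ 0) :
    MapsTo (planeTransportInv n m).mulVec {y | n ⬝ᵥ y = 0} {x | m ⬝ᵥ x = 0} := by
  intro y (hy : n ⬝ᵥ y = 0)
  show m ⬝ᵥ (planeTransportInv n m *ᵥ y) = 0
  simp only [planeTransportInv, add_mulVec, sub_mulVec, one_mulVec, smul_mulVec,
    vecMulVec_mulVec_eq_smul, hy, zero_smul, add_zero, dotProduct_sub, dotProduct_smul,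
    dotProduct_comm m n, smul_eq_mul]
  field_simp
  ring

end PlaneTransport

/-- For unit vectors `n, m ∈ ℝ³` with `n·m > 0`, the matrix
`B = (I - n nᵀ)(I - m mᵀ) + n mᵀ` is invertible, maps the orthogonal complement of `m`
onto the orthogonal complement of `n`, and maps the span of `m` onto the span of `n`. -/
theorem stmt3 (n m : Fin 3 → ℝ)
    (hn : n ⬝ᵥ n = 1) (hm : m ⬝ᵥ m = 1) (hnm : 0 < n ⬝ᵥ m)
    (B : Matrix (Fin 3) (Fin 3) ℝ)
    (hB : B = (1 - vecMulVec n n) * (1 - vecMulVec m m) + vecMulVec n m) :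
    IsUnit B ∧
      B.mulVec '' {x | m ⬝ᵥ x = 0} = {x | n ⬝ᵥ x = 0} ∧
      B.mulVec '' {x | ∃ t : ℝ, x = t • m} = {x | ∃ t : ℝ, x = t • n} := by
  obtain rfl : B = planeTransport n m := hB
  have hnm' := hnm.ne'
  have hinv := planeTransport_mul_planeTransportInv hn hm hnm'
  exact ⟨IsUnit.of_mul_eq_one _ hinv,
    mulVec_image_eq_of_mul_eq_one hinv (mapsTo_planeTransport_orthogonal hn)
      (mapsTo_planeTransportInv_orthogonal hnm'),
    mulVec_image_eq_of_mul_eq_one hinv (mapsTo_mulVec_line (planeTransport_mulVec_self hm))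
      (mapsTo_mulVec_line (planeTransportInv_mulVec_self hn hnm'))⟩
end

section
/- Let n, m be unit vectors in R^3 and B = (I - n n^T)(I - m m^T) + n m^T. Then the singular values of B are 1, 1, and n·m, i.e., B^T B has eigenvalues 1, 1, (n·m)^2. -/
open Matrix Polynomial

set_option maxHeartbeats 1000000

private lemma finmk0 : (⟨0, by omega⟩ : Fin 3) = 0 := rfl
private lemma finmk1 : (⟨1, by omega⟩ : Fin 3) = 1 := rfl
private lemma finmk2 : (⟨2, by omega⟩ : Fin 3) = 2 := rfl

/-- charpoly of `1 - w wᵀ` for any `w : Fin 3 → ℝ`. -/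
lemma charpoly_one_sub_vecMulVec (w : Fin 3 → ℝ) :
    (1 - vecMulVec w w : Matrix (Fin 3) (Fin 3) ℝ).charpoly
      = (X - 1) ^ 2 * (X - C (1 - w ⬝ᵥ w)) := by
  simp only [Matrix.charpoly, Matrix.det_fin_three, charmatrix_apply, Matrix.diagonal_apply,
    Matrix.sub_apply, Matrix.one_apply, Matrix.vecMulVec_apply, dotProduct,
    Fin.sum_univ_three, Fin.reduceEq, reduceIte, Fin.isValue,
    _root_.map_add, _root_.map_mul, _root_.map_sub, _root_.map_one, _root_.map_zero]
  ring

/-- For unit vectors `n, m ∈ ℝ³` and `B = (I - n nᵀ)(I - m mᵀ) + n mᵀ`, the singular values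
of `B` are `1, 1, n·m`, i.e. `BᵀB` has eigenvalues `1, 1, (n·m)²`: its characteristic
polynomial is `(X - 1)²(X - (n·m)²)`. -/
theorem stmt4 (n m : Fin 3 → ℝ)
    (hn : n ⬝ᵥ n = 1) (hm : m ⬝ᵥ m = 1)
    (B : Matrix (Fin 3) (Fin 3) ℝ)
    (hB : B = (1 - vecMulVec n n) * (1 - vecMulVec m m) + vecMulVec n m) :
    (Bᵀ * B).charpoly = (X - 1) ^ 2 * (X - C ((n ⬝ᵥ m) ^ 2)) := by
  have hn3 : n 0 * n 0 + n 1 * n 1 + n 2 * n 2 = 1 := by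
    simpa [dotProduct, Fin.sum_univ_three] using hn
  have hm3 : m 0 * m 0 + m 1 * m 1 + m 2 * m 2 = 1 := by
    simpa [dotProduct, Fin.sum_univ_three] using hm
  have hM : Bᵀ * B = 1 - vecMulVec (fun i => n i - (n ⬝ᵥ m) * m i)
      (fun i => n i - (n ⬝ᵥ m) * m i) := by
    subst hB
    ext i j
    fin_cases i <;> fin_cases j <;>
      simp only [Matrix.mul_apply, Matrix.add_apply, Matrix.sub_apply, Matrix.one_apply,
        Matrix.transpose_apply, Matrix.vecMulVec_apply, dotProduct, Fin.sum_univ_three,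
        finmk0, finmk1, finmk2, Fin.reduceEq, reduceIte, Fin.isValue]
    · linear_combination (m 0*m 0 + (2)*n 2*m 0*m 0*m 2 + n 2*n 2*m 0*m 0*m 2*m 2 + (2)*n 1*m 0*m 0*m 1 + (2)*n 1*n 2*m 0*m 0*m 1*m 2 + n 1*n 1*m 0*m 0*m 1*m 1 + (-2)*n 0*m 0 + (2)*n 0*m 0*m 0*m 0 + (-2)*n 0*n 2*m 0*m 2 + (2)*n 0*n 2*m 0*m 0*m 0*m 2 + (-2)*n 0*n 1*m 0*m 1 + (2)*n 0*n 1*m 0*m 0*m 0*m 1 + n 0*n 0 + (-2)*n 0*n 0*m 0*m 0 + n 0*n 0*m 0*m 0*m 0*m 0) * hn3 + (m 0*m 0) * hm3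
    · linear_combination (m 0*m 1 + (2)*n 2*m 0*m 1*m 2 + n 2*n 2*m 0*m 1*m 2*m 2 + (-1)*n 1*m 0 + (2)*n 1*m 0*m 1*m 1 + (-1)*n 1*n 2*m 0*m 2 + (2)*n 1*n 2*m 0*m 1*m 1*m 2 + (-1)*n 1*n 1*m 0*m 1 + n 1*n 1*m 0*m 1*m 1*m 1 + (-1)*n 0*m 1 + (2)*n 0*m 0*m 0*m 1 + (-1)*n 0*n 2*m 1*m 2 + (2)*n 0*n 2*m 0*m 0*m 1*m 2 + n 0*n 1 + (-1)*n 0*n 1*m 1*m 1 + (-1)*n 0*n 1*m 0*m 0 + (2)*n 0*n 1*m 0*m 0*m 1*m 1 + (-1)*n 0*n 0*m 0*m 1 + n 0*n 0*m 0*m 0*m 0*m 1) * hn3 + (m 0*m 1) * hm3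
    · linear_combination (m 0*m 2 + (-1)*n 2*m 0 + (2)*n 2*m 0*m 2*m 2 + (-1)*n 2*n 2*m 0*m 2 + n 2*n 2*m 0*m 2*m 2*m 2 + (2)*n 1*m 0*m 1*m 2 + (-1)*n 1*n 2*m 0*m 1 + (2)*n 1*n 2*m 0*m 1*m 2*m 2 + n 1*n 1*m 0*m 1*m 1*m 2 + (-1)*n 0*m 2 + (2)*n 0*m 0*m 0*m 2 + n 0*n 2 + (-1)*n 0*n 2*m 2*m 2 + (-1)*n 0*n 2*m 0*m 0 + (2)*n 0*n 2*m 0*m 0*m 2*m 2 + (-1)*n 0*n 1*m 1*m 2 + (2)*n 0*n 1*m 0*m 0*m 1*m 2 + (-1)*n 0*n 0*m 0*m 2 + n 0*n 0*m 0*m 0*m 0*m 2) * hn3 + (m 0*m 2) * hm3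
    · linear_combination (m 0*m 1 + (2)*n 2*m 0*m 1*m 2 + n 2*n 2*m 0*m 1*m 2*m 2 + (-1)*n 1*m 0 + (2)*n 1*m 0*m 1*m 1 + (-1)*n 1*n 2*m 0*m 2 + (2)*n 1*n 2*m 0*m 1*m 1*m 2 + (-1)*n 1*n 1*m 0*m 1 + n 1*n 1*m 0*m 1*m 1*m 1 + (-1)*n 0*m 1 + (2)*n 0*m 0*m 0*m 1 + (-1)*n 0*n 2*m 1*m 2 + (2)*n 0*n 2*m 0*m 0*m 1*m 2 + n 0*n 1 + (-1)*n 0*n 1*m 1*m 1 + (-1)*n 0*n 1*m 0*m 0 + (2)*n 0*n 1*m 0*m 0*m 1*m 1 + (-1)*n 0*n 0*m 0*m 1 + n 0*n 0*m 0*m 0*m 0*m 1) * hn3 + (m 0*m 1) * hm3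
    · linear_combination (m 1*m 1 + (2)*n 2*m 1*m 1*m 2 + n 2*n 2*m 1*m 1*m 2*m 2 + (-2)*n 1*m 1 + (2)*n 1*m 1*m 1*m 1 + (-2)*n 1*n 2*m 1*m 2 + (2)*n 1*n 2*m 1*m 1*m 1*m 2 + n 1*n 1 + (-2)*n 1*n 1*m 1*m 1 + n 1*n 1*m 1*m 1*m 1*m 1 + (2)*n 0*m 0*m 1*m 1 + (2)*n 0*n 2*m 0*m 1*m 1*m 2 + (-2)*n 0*n 1*m 0*m 1 + (2)*n 0*n 1*m 0*m 1*m 1*m 1 + n 0*n 0*m 0*m 0*m 1*m 1) * hn3 + (m 1*m 1) * hm3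
    · linear_combination (m 1*m 2 + (-1)*n 2*m 1 + (2)*n 2*m 1*m 2*m 2 + (-1)*n 2*n 2*m 1*m 2 + n 2*n 2*m 1*m 2*m 2*m 2 + (-1)*n 1*m 2 + (2)*n 1*m 1*m 1*m 2 + n 1*n 2 + (-1)*n 1*n 2*m 2*m 2 + (-1)*n 1*n 2*m 1*m 1 + (2)*n 1*n 2*m 1*m 1*m 2*m 2 + (-1)*n 1*n 1*m 1*m 2 + n 1*n 1*m 1*m 1*m 1*m 2 + (2)*n 0*m 0*m 1*m 2 + (-1)*n 0*n 2*m 0*m 1 + (2)*n 0*n 2*m 0*m 1*m 2*m 2 + (-1)*n 0*n 1*m 0*m 2 + (2)*n 0*n 1*m 0*m 1*m 1*m 2 + n 0*n 0*m 0*m 0*m 1*m 2) * hn3 + (m 1*m 2) * hm3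
    · linear_combination (m 0*m 2 + (-1)*n 2*m 0 + (2)*n 2*m 0*m 2*m 2 + (-1)*n 2*n 2*m 0*m 2 + n 2*n 2*m 0*m 2*m 2*m 2 + (2)*n 1*m 0*m 1*m 2 + (-1)*n 1*n 2*m 0*m 1 + (2)*n 1*n 2*m 0*m 1*m 2*m 2 + n 1*n 1*m 0*m 1*m 1*m 2 + (-1)*n 0*m 2 + (2)*n 0*m 0*m 0*m 2 + n 0*n 2 + (-1)*n 0*n 2*m 2*m 2 + (-1)*n 0*n 2*m 0*m 0 + (2)*n 0*n 2*m 0*m 0*m 2*m 2 + (-1)*n 0*n 1*m 1*m 2 + (2)*n 0*n 1*m 0*m 0*m 1*m 2 + (-1)*n 0*n 0*m 0*m 2 + n 0*n 0*m 0*m 0*m 0*m 2) * hn3 + (m 0*m 2) * hm3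
    · linear_combination (m 1*m 2 + (-1)*n 2*m 1 + (2)*n 2*m 1*m 2*m 2 + (-1)*n 2*n 2*m 1*m 2 + n 2*n 2*m 1*m 2*m 2*m 2 + (-1)*n 1*m 2 + (2)*n 1*m 1*m 1*m 2 + n 1*n 2 + (-1)*n 1*n 2*m 2*m 2 + (-1)*n 1*n 2*m 1*m 1 + (2)*n 1*n 2*m 1*m 1*m 2*m 2 + (-1)*n 1*n 1*m 1*m 2 + n 1*n 1*m 1*m 1*m 1*m 2 + (2)*n 0*m 0*m 1*m 2 + (-1)*n 0*n 2*m 0*m 1 + (2)*n 0*n 2*m 0*m 1*m 2*m 2 + (-1)*n 0*n 1*m 0*m 2 + (2)*n 0*n 1*m 0*m 1*m 1*m 2 + n 0*n 0*m 0*m 0*m 1*m 2) * hn3 + (m 1*m 2) * hm3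
    · linear_combination (m 2*m 2 + (-2)*n 2*m 2 + (2)*n 2*m 2*m 2*m 2 + n 2*n 2 + (-2)*n 2*n 2*m 2*m 2 + n 2*n 2*m 2*m 2*m 2*m 2 + (2)*n 1*m 1*m 2*m 2 + (-2)*n 1*n 2*m 1*m 2 + (2)*n 1*n 2*m 1*m 2*m 2*m 2 + n 1*n 1*m 1*m 1*m 2*m 2 + (2)*n 0*m 0*m 2*m 2 + (-2)*n 0*n 2*m 0*m 2 + (2)*n 0*n 2*m 0*m 2*m 2*m 2 + (2)*n 0*n 1*m 0*m 1*m 2*m 2 + n 0*n 0*m 0*m 0*m 2*m 2) * hn3 + (m 2*m 2) * hm3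
  have hw : (fun i => n i - (n ⬝ᵥ m) * m i) ⬝ᵥ (fun i => n i - (n ⬝ᵥ m) * m i)
      = 1 - (n ⬝ᵥ m) ^ 2 := by
    simp only [dotProduct, Fin.sum_univ_three]
    linear_combination hn3 + (n 0 * m 0 + n 1 * m 1 + n 2 * m 2) ^ 2 * hm3
  rw [hM, charpoly_one_sub_vecMulVec, hw]
  ring_nf
end

section
/- Let n, m be unit vectors in R^3 with |n - m| ≤ h and B = (I - n n^T)(I - m m^T) + n m^T. Then ‖I - B B^T‖ ≤ C h^2 for an absolute constant C, where ‖·‖ is the operator norm. -/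
/-!
`P a = 1 - a aᵀ` is the orthogonal projection onto `a⊥` when `|a| = 1`. Since `P m m = 0` and
`P n² = P n`, expanding `B Bᵀ` for `B = P n P m + n mᵀ` leaves `P n P m P n + n nᵀ`, and
`P n P m P n = P n - w wᵀ` with `w = P n m`. Hence `1 - B Bᵀ = w wᵀ`, whose operator norm is
`|w|² = 1 - (n·m)² = |n - m|² - (1 - n·m)² ≤ |n - m|²`.
-/

open Matrix

namespace Matrix

section perpProj

variable {ι R : Type*} [DecidableEq ι] [CommRing R]

def perpProj (a : ι → R) : Matrix ι ι R := 1 - vecMulVec a a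

lemma perpProj_transpose (a : ι → R) : (perpProj a)ᵀ = perpProj a := by
  simp [perpProj, transpose_sub, transpose_vecMulVec]

variable [Fintype ι] {a : ι → R}

lemma perpProj_mulVec (a x : ι → R) : perpProj a *ᵥ x = x - (a ⬝ᵥ x) • a := by
  simp [perpProj, sub_mulVec, vecMulVec_mulVec]

lemma perpProj_mulVec_self (ha : a ⬝ᵥ a = 1) : perpProj a *ᵥ a = 0 := by
  simp [perpProj_mulVec, ha]

lemma perpProj_mul_vecMulVec_self (ha : a ⬝ᵥ a = 1) (b : ι → R) :
    perpProj a * vecMulVec a b = 0 := by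
  rw [mul_vecMulVec, perpProj_mulVec_self ha, zero_vecMulVec]

lemma vecMulVec_self_mul_perpProj (ha : a ⬝ᵥ a = 1) (b : ι → R) :
    vecMulVec b a * perpProj a = 0 := by
  rw [vecMulVec_mul, ← perpProj_transpose, vecMul_transpose, perpProj_mulVec_self ha,
    vecMulVec_zero]

lemma perpProj_mul_self (ha : a ⬝ᵥ a = 1) : perpProj a * perpProj a = perpProj a := by
  nth_rw 2 [perpProj]
  rw [mul_sub, perpProj_mul_vecMulVec_self ha, mul_one, sub_zero]

lemma perpProj_mul_perpProj_mul_perpProj (ha : a ⬝ᵥ a = 1) (b : ι → R) :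
    perpProj a * perpProj b * perpProj a
      = perpProj a - vecMulVec (perpProj a *ᵥ b) (perpProj a *ᵥ b) := by
  nth_rw 2 [perpProj]
  rw [mul_sub, sub_mul, mul_one, perpProj_mul_self ha, mul_vecMulVec, vecMulVec_mul,
    ← perpProj_transpose a, vecMul_transpose, perpProj_transpose]

theorem one_sub_mul_transpose_eq_vecMulVec {n m : ι → R} {B : Matrix ι ι R}
    (hn : n ⬝ᵥ n = 1) (hm : m ⬝ᵥ m = 1) (hB : B = perpProj n * perpProj m + vecMulVec n m) :
    1 - B * Bᵀ = vecMulVec (perpProj n *ᵥ m) (perpProj n *ᵥ m) := by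
  have hBBt : B * Bᵀ = perpProj n * perpProj m * perpProj n + vecMulVec n n := by
    simp only [hB, transpose_add, transpose_mul, perpProj_transpose, transpose_vecMulVec,
      add_mul, mul_add, Matrix.mul_assoc, perpProj_mul_vecMulVec_self hm, vecMulVec_mul_vecMulVec,
      hm, one_smul, ← Matrix.mul_assoc (perpProj m), perpProj_mul_self hm,
      ← Matrix.mul_assoc (vecMulVec n m), vecMulVec_self_mul_perpProj hm, Matrix.mul_zero,
      Matrix.zero_mul, add_zero, zero_add]
  rw [hBBt, perpProj_mul_perpProj_mul_perpProj hn, perpProj]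
  abel

end perpProj

section norm

variable {ι : Type*} [Fintype ι]

lemma dotProduct_self_eq_norm_toLp_sq (x : ι → ℝ) : x ⬝ᵥ x = ‖WithLp.toLp 2 x‖ ^ 2 := by
  rw [← real_inner_self_eq_norm_sq]
  rfl

lemma dotProduct_perpProj_mulVec_self_le {n m : ι → ℝ} [DecidableEq ι]
    (hn : n ⬝ᵥ n = 1) (hm : m ⬝ᵥ m = 1) :
    (perpProj n *ᵥ m) ⬝ᵥ (perpProj n *ᵥ m) ≤ (n - m) ⬝ᵥ (n - m) := by
  have hmn : m ⬝ᵥ n = n ⬝ᵥ m := dotProduct_comm m n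
  have hw : (perpProj n *ᵥ m) ⬝ᵥ (perpProj n *ᵥ m) = 1 - (n ⬝ᵥ m) ^ 2 := by
    simp only [perpProj_mulVec, sub_dotProduct, dotProduct_sub, smul_dotProduct, dotProduct_smul,
      hn, hm, hmn, smul_eq_mul]
    ring
  have hd : (n - m) ⬝ᵥ (n - m) = 2 - 2 * (n ⬝ᵥ m) := by
    simp only [sub_dotProduct, dotProduct_sub, hn, hm, hmn]
    ring
  rw [hw, hd]
  nlinarith [sq_nonneg (1 - n ⬝ᵥ m)]

variable [DecidableEq ι]

lemma norm_toEuclideanCLM_vecMulVec {𝕜 : Type*} [RCLike 𝕜] (x y : ι → 𝕜) :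
    ‖toEuclideanCLM (𝕜 := 𝕜) (vecMulVec x (star y))‖ = ‖WithLp.toLp 2 x‖ * ‖WithLp.toLp 2 y‖ := by
  have hrankOne : toEuclideanCLM (𝕜 := 𝕜) (vecMulVec x (star y))
      = InnerProductSpace.rankOne 𝕜 (WithLp.toLp 2 x) (WithLp.toLp 2 y) := by
    ext1 z
    apply WithLp.ofLp_injective
    simp [EuclideanSpace.inner_eq_star_dotProduct, vecMulVec_mulVec, dotProduct_comm]
  rw [hrankOne, InnerProductSpace.norm_rankOne]

lemma norm_toEuclideanCLM_vecMulVec_self (x : ι → ℝ) :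
    ‖toEuclideanCLM (𝕜 := ℝ) (vecMulVec x x)‖ = x ⬝ᵥ x := by
  simpa [dotProduct_self_eq_norm_toLp_sq, sq] using norm_toEuclideanCLM_vecMulVec x x

end norm

end Matrix

/-- There is an absolute constant `C > 0` such that for all unit vectors `n, m ∈ ℝ³` with
`|n - m| ≤ h` and `B = (I - n nᵀ)(I - m mᵀ) + n mᵀ`, the operator norm of `I - B Bᵀ`
is at most `C h²`. -/
theorem stmt5 :
    ∃ C : ℝ, 0 < C ∧
      ∀ (n m : Fin 3 → ℝ) (h : ℝ) (B : Matrix (Fin 3) (Fin 3) ℝ),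
        n ⬝ᵥ n = 1 → m ⬝ᵥ m = 1 →
        Real.sqrt ((n - m) ⬝ᵥ (n - m)) ≤ h →
        B = (1 - vecMulVec n n) * (1 - vecMulVec m m) + vecMulVec n m →
        ‖Matrix.toEuclideanCLM (𝕜 := ℝ) (n := Fin 3) (1 - B * Bᵀ)‖ ≤ C * h ^ 2 := by
  refine ⟨1, one_pos, fun n m h B hn hm hnm hB => ?_⟩
  rw [one_sub_mul_transpose_eq_vecMulVec hn hm hB, norm_toEuclideanCLM_vecMulVec_self, one_mul]
  calc (perpProj n *ᵥ m) ⬝ᵥ (perpProj n *ᵥ m) ≤ (n - m) ⬝ᵥ (n - m) :=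
        dotProduct_perpProj_mulVec_self_le hn hm
    _ = Real.sqrt ((n - m) ⬝ᵥ (n - m)) ^ 2 := by
        rw [Real.sq_sqrt (by rw [dotProduct_self_eq_norm_toLp_sq]; positivity)]
    _ ≤ h ^ 2 := pow_le_pow_left₀ (Real.sqrt_nonneg _) hnm 2
end

section
/- Let n, m be unit vectors in R^3 and B = (I - n n^T)(I - m m^T) + n m^T. Then det B = n·m. -/
open Matrix

/-- For unit vectors `n, m ∈ ℝ³` and `B = (I - n nᵀ)(I - m mᵀ) + n mᵀ`, `det B = n·m`. -/
theorem stmt6 (n m : Fin 3 → ℝ)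
    (hn : n ⬝ᵥ n = 1) (hm : m ⬝ᵥ m = 1)
    (B : Matrix (Fin 3) (Fin 3) ℝ)
    (hB : B = (1 - vecMulVec n n) * (1 - vecMulVec m m) + vecMulVec n m) :
    B.det = n ⬝ᵥ m := by
  subst hB
  simp only [dotProduct, Fin.sum_univ_three] at hn hm ⊢
  simp only [Matrix.det_fin_three, Matrix.add_apply, Matrix.mul_apply, Matrix.sub_apply,
    Matrix.one_apply, Matrix.vecMulVec_apply, Fin.sum_univ_three]
  norm_num [Fin.ext_iff]
  linear_combination (m 0 ^ 2 + m 1 ^ 2 + m 2 ^ 2 - 1) * hn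
end
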